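/- arXiv:2105.07746 — 4 statements merged into one kernel-verified Lean document; each statement's English description precedes it below -/
import Mathlib

section
/- Let κ be a regular uncountable cardinal. If ◊_κ holds, then there exists a maximal stationary almost disjoint family on κ of cardinality 2^κ. -/
/-!
Given a ◊-sequence `s`, let `G y = {i | y ∩ i = s i}` be the set of places where `s` guesses
`y ⊆ κ` correctly. Each `G y` is stationary by ◊, and for `y ≠ y'` the set `G y ∩ G y'` is
bounded by any point `a` of the symmetric difference (past `a` the two guesses would differ),
hence non-stationary. So `y ↦ G y` is an injective stationary almost disjoint family of size
`2^κ`, and any maximal family extending it (Zorn) still has size `2^κ`.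
-/

open Set Cardinal

/-- `c` is a club in the well-ordered type `α` (thought of as the cardinal `κ = #α`):
it is closed (contains the supremum of each of its nonempty bounded subsets) and unbounded. -/
def IsClubIn {α : Type*} [LinearOrder α] (c : Set α) : Prop :=
  (∀ s ⊆ c, s.Nonempty → ∀ a : α, IsLUB s a → a ∈ c) ∧ ∀ a : α, ∃ b ∈ c, a < b

/-- `x` is stationary: it meets every club. -/
def IsStatIn {α : Type*} [LinearOrder α] (x : Set α) : Prop :=
  ∀ c : Set α, IsClubIn c → (x ∩ c).Nonempty

/-- `A` is a stationary almost disjoint family: a family of stationary sets whose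
pairwise intersections are non-stationary. -/
def IsSADFamily {α : Type*} [LinearOrder α] (A : Set (Set α)) : Prop :=
  (∀ x ∈ A, IsStatIn x) ∧ ∀ x ∈ A, ∀ y ∈ A, x ≠ y → ¬ IsStatIn (x ∩ y)

/-- `A` is a maximal stationary almost disjoint family: no stationary set is
stationary almost disjoint from every member of `A`. -/
def IsMaxSADFamily {α : Type*} [LinearOrder α] (A : Set (Set α)) : Prop :=
  IsSADFamily A ∧ ∀ z : Set α, IsStatIn z → ∃ x ∈ A, IsStatIn (z ∩ x)

/-- The diamond principle `◊_κ`: there is a sequence `(s i)_{i<κ}` with `s i ⊆ i` such that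
for every `y ⊆ κ` the set `{i < κ : y ∩ i = s i}` is stationary. -/
def DiamondIn (α : Type*) [LinearOrder α] : Prop :=
  ∃ s : α → Set α, (∀ i : α, s i ⊆ Set.Iio i) ∧
    ∀ y : Set α, IsStatIn {i : α | y ∩ Set.Iio i = s i}

section Stationary

variable {α : Type*} [LinearOrder α]

theorem noMaxOrder_of_mk_Iio_lt (hα : ℵ₀ ≤ #α) (hinit : ∀ a : α, #(Iio a) < #α) :
    NoMaxOrder α := by
  refine ⟨fun a => ?_⟩
  by_contra! hmax
  have hIic : #(Iic a) = #(Iio a) + 1 := by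
    rw [← Iio_insert]
    exact mk_insert (lt_irrefl a)
  rw [(eq_univ_of_forall hmax : Iic a = Set.univ), mk_univ] at hIic
  exact (add_lt_of_lt hα (hinit a) (one_lt_aleph0.trans_le hα)).ne hIic.symm

theorem isClubIn_Ioi [NoMaxOrder α] (a : α) : IsClubIn (Ioi a) := by
  refine ⟨fun s hs ⟨x, hx⟩ b hb => (hs hx).trans_le (hb.1 hx), fun b => ?_⟩
  obtain ⟨c, hc⟩ := exists_gt (max a b)
  exact ⟨c, max_lt_iff.1 hc⟩

theorem not_isStatIn_of_bddAbove [NoMaxOrder α] {x : Set α} (hx : BddAbove x) :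
    ¬ IsStatIn x := by
  rintro hstat
  obtain ⟨a, ha⟩ := hx
  obtain ⟨i, hix, hai⟩ := hstat (Ioi a) (isClubIn_Ioi a)
  exact (ha hix).not_gt hai

theorem IsSADFamily.insert {A : Set (Set α)} (hA : IsSADFamily A) {z : Set α}
    (hz : IsStatIn z) (hdisj : ∀ x ∈ A, ¬ IsStatIn (z ∩ x)) : IsSADFamily (insert z A) := by
  refine ⟨?_, ?_⟩
  · rintro x (rfl | hx)
    exacts [hz, hA.1 x hx]
  · rintro x (rfl | hx) y (rfl | hy) hne
    · exact absurd rfl hne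
    · exact hdisj y hy
    · exact inter_comm x _ ▸ hdisj x hx
    · exact hA.2 x hx y hy hne

theorem isSADFamily_sUnion {c : Set (Set (Set α))} (hc : IsChain (· ⊆ ·) c)
    (hSAD : ∀ A ∈ c, IsSADFamily A) : IsSADFamily (⋃₀ c) := by
  refine ⟨fun x ⟨A, hA, hx⟩ => (hSAD A hA).1 x hx, ?_⟩
  rintro x ⟨A, hA, hx⟩ y ⟨B, hB, hy⟩ hne
  rcases hc.total hA hB with hAB | hBA
  · exact (hSAD B hB).2 x (hAB hx) y hy hne
  · exact (hSAD A hA).2 x hx y (hBA hy) hne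

theorem IsSADFamily.exists_isMaxSADFamily_superset {A : Set (Set α)} (hA : IsSADFamily A) :
    ∃ B, A ⊆ B ∧ IsMaxSADFamily B := by
  obtain ⟨B, hAB, hB, hBmax⟩ := zorn_subset_nonempty {B | IsSADFamily B}
    (fun c hc hchain _ => ⟨⋃₀ c, isSADFamily_sUnion hchain hc, fun _ => subset_sUnion_of_mem⟩)
    A hA
  refine ⟨B, hAB, hB, fun z hz => ?_⟩
  by_contra! hdisj
  have hzB : z ∈ B := hBmax (hB.insert hz hdisj) (subset_insert z B) (mem_insert z B)
  exact hdisj z hzB (by rwa [inter_self])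

end Stationary

section Diamond

variable {α : Type*} [LinearOrder α]

def correctGuesses (s : α → Set α) (y : Set α) : Set α :=
  {i | y ∩ Iio i = s i}

theorem bddAbove_correctGuesses_inter (s : α → Set α) {y y' : Set α} (hne : y ≠ y') :
    BddAbove (correctGuesses s y ∩ correctGuesses s y') := by
  obtain ⟨a, ha⟩ : ∃ a, ¬ (a ∈ y ↔ a ∈ y') := by
    by_contra! h
    exact hne (ext h)
  refine ⟨a, fun i ⟨hi, hi'⟩ => le_of_not_gt fun hai => ha ?_⟩
  have hagree : y ∩ Iio i = y' ∩ Iio i := hi.trans hi'.symm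
  simpa [hai] using congrArg (a ∈ ·) hagree

variable [NoMaxOrder α] {s : α → Set α}

theorem correctGuesses_injective (hs : ∀ y, IsStatIn (correctGuesses s y)) :
    Function.Injective (correctGuesses s) := by
  intro y y' h
  by_contra hne
  have hbdd := bddAbove_correctGuesses_inter s hne
  rw [h, inter_self] at hbdd
  exact not_isStatIn_of_bddAbove hbdd (hs y')

theorem isSADFamily_range_correctGuesses (hs : ∀ y, IsStatIn (correctGuesses s y)) :
    IsSADFamily (range (correctGuesses s)) := by
  refine ⟨forall_mem_range.2 hs, ?_⟩
  rintro _ ⟨y, rfl⟩ _ ⟨y', rfl⟩ hne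
  exact not_isStatIn_of_bddAbove (bddAbove_correctGuesses_inter s (ne_of_apply_ne _ hne))

end Diamond

theorem exists_maxSAD_of_diamond_general {α : Type*} [LinearOrder α]
    (hunc : ℵ₀ < #α)
    (hinit : ∀ a : α, #(Set.Iio a) < #α)
    (hdiamond : DiamondIn α) :
    ∃ A : Set (Set α), IsMaxSADFamily A ∧ #A = 2 ^ #α := by
  obtain ⟨s, -, hs⟩ := hdiamond
  have := noMaxOrder_of_mk_Iio_lt hunc.le hinit
  obtain ⟨A, hsub, hA⟩ := (isSADFamily_range_correctGuesses hs).exists_isMaxSADFamily_superset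
  refine ⟨A, hA, le_antisymm ((mk_set_le A).trans_eq mk_set) ?_⟩
  calc 2 ^ #α = #(range (correctGuesses s)) :=
        mk_set.symm.trans (mk_range_eq _ (correctGuesses_injective hs)).symm
    _ ≤ #A := mk_le_mk_of_subset hsub

/-- If `κ` is regular uncountable and `◊_κ` holds, then there is a maximal stationary
almost disjoint family of cardinality `2^κ`. Here `κ` is represented as a well-ordered type
`α` of regular uncountable cardinality all of whose proper initial segments are of size
`< #α`. -/
theorem exists_maxSAD_of_diamond {α : Type*} [LinearOrder α] [WellFoundedLT α]
    (hreg : (#α).IsRegular) (hunc : ℵ₀ < #α)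
    (hinit : ∀ a : α, #(Set.Iio a) < #α)
    (hdiamond : DiamondIn α) :
    ∃ A : Set (Set α), IsMaxSADFamily A ∧ #A = 2 ^ #α :=
  exists_maxSAD_of_diamond_general hunc hinit hdiamond
end

section
/- Let κ be a regular uncountable cardinal, let E^κ_ω = {k < κ : cf(k) = ω}, and for every k ∈ E^κ_ω fix a sequence (j^k_n)_{n<ω} cofinal in k. Then there exists n* < ω such that for every i < κ the set {k ∈ E^κ_ω : j^k_{n*} ≥ i} is stationary in κ. -/
open Set Cardinal

/-- `k` has cofinality `ω`: it is a limit point (nonzero with no maximum below it) which is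
the supremum of a countable sequence of smaller elements. The set of all such `k` is `E^κ_ω`. -/
def HasCofOmega {α : Type*} [LinearOrder α] (k : α) : Prop :=
  (∃ m, m < k) ∧ (∀ m < k, ∃ i, m < i ∧ i < k) ∧
    ∃ g : ℕ → α, (∀ n, g n < k) ∧ ∀ i < k, ∃ n, i ≤ g n

/-!
Suppose no index works: for each `n` there are `i n` and a club `C n` missing every
`k ∈ E^κ_ω` with `j k n ≥ i n`. By regularity the `i n` are bounded by some `b`. Climbing
through the clubs `C 0, C 1, …` in an interleaved order produces an increasing sequence above
`b` whose supremum `k` has cofinality `ω` and lies in every `C n`. As `j k` is cofinal in `k`,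
some `j k n ≥ b ≥ i n`, contradicting the choice of `C n`.
-/

section LinearOrder

variable {α : Type*} [LinearOrder α]

lemma hasCofOmega_of_isLUB_range {y : ℕ → α} (hy : StrictMono y) {k : α}
    (hk : IsLUB (range y) k) : HasCofOmega k := by
  have hy_lt : ∀ m, y m < k := fun m => (hy m.lt_succ_self).trans_le (hk.1 ⟨m + 1, rfl⟩)
  have hy_cofinal : ∀ i < k, ∃ m, i < y m := fun i hi => by
    by_contra! h
    exact hi.not_ge (hk.2 <| forall_mem_range.2 h)
  refine ⟨⟨y 0, hy_lt 0⟩, fun i hi => ?_, y, hy_lt, fun i hi => ?_⟩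
  · obtain ⟨m, hm⟩ := hy_cofinal i hi
    exact ⟨y m, hm, hy_lt m⟩
  · obtain ⟨m, hm⟩ := hy_cofinal i hi
    exact ⟨m, hm.le⟩

lemma IsClubIn.mem_of_isLUB_range {C : Set α} (hC : IsClubIn C) {y : ℕ → α} (hy : Monotone y)
    {k : α} (hk : IsLUB (range y) k) (hfreq : ∀ m, ∃ p ≥ m, y p ∈ C) : k ∈ C := by
  refine hC.1 (range y ∩ C) inter_subset_right ?_ k ⟨fun x hx => hk.1 hx.1, fun u hu => ?_⟩
  · obtain ⟨p, -, hp⟩ := hfreq 0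
    exact ⟨y p, mem_range_self p, hp⟩
  · refine hk.2 (forall_mem_range.2 fun m => ?_)
    obtain ⟨p, hmp, hp⟩ := hfreq m
    exact (hy hmp).trans (hu ⟨mem_range_self p, hp⟩)

lemma bddAbove_range_of_isRegular (hreg : (#α).IsRegular) (hunc : ℵ₀ < #α)
    (hinit : ∀ a : α, #(Iio a) < #α) (f : ℕ → α) : BddAbove (range f) := by
  by_contra h
  have hcover : (univ : Set α) ⊆ ⋃ n : ULift.{_} ℕ, Iio (f n.down) := fun x _ => by
    obtain ⟨_, ⟨n, rfl⟩, hx⟩ := not_bddAbove_iff.1 h x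
    exact mem_iUnion.2 ⟨⟨n⟩, hx⟩
  have hsum_lt : (sum fun n : ULift.{_} ℕ => #(Iio (f n.down))) < #α :=
    sum_lt_of_isRegular hreg (by simpa using hunc) fun n => hinit (f n.down)
  refine hsum_lt.not_ge ?_
  calc #α = #(univ : Set α) := mk_univ.symm
    _ ≤ #(⋃ n : ULift.{_} ℕ, Iio (f n.down)) := mk_le_mk_of_subset hcover
    _ ≤ _ := mk_iUnion_le_sum_mk

/-- Every `n` occurs as `(Nat.unpair m).1` for infinitely many `m`, so the chain steps into the
`n`-th club cofinally often. -/
def clubChain (next : ℕ → α → α) (a : α) : ℕ → α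
  | 0 => a
  | m + 1 => next (Nat.unpair m).1 (clubChain next a m)

end LinearOrder

section WellOrder

variable {α : Type*} [LinearOrder α] [WellFoundedLT α]

lemma exists_isLUB_of_bddAbove {s : Set α} (hbdd : BddAbove s) :
    ∃ b, IsLUB s b :=
  ⟨wellFounded_lt.min _ hbdd, wellFounded_lt.min_mem _ hbdd,
    fun _ hv => not_lt.1 (wellFounded_lt.not_lt_min _ hv)⟩

lemma exists_hasCofOmega_mem_of_isClubIn (hreg : (#α).IsRegular) (hunc : ℵ₀ < #α)
    (hinit : ∀ a : α, #(Iio a) < #α) {C : ℕ → Set α} (hC : ∀ n, IsClubIn (C n)) (a : α) :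
    ∃ k, HasCofOmega k ∧ a < k ∧ ∀ n, k ∈ C n := by
  choose next hnext_mem hlt_next using fun n x => (hC n).2 x
  set y := clubChain next a
  have hy_succ : ∀ m, y m < y (m + 1) := fun m => hlt_next _ (y m)
  have hy : StrictMono y := strictMono_nat_of_lt_succ hy_succ
  obtain ⟨k, hk⟩ := exists_isLUB_of_bddAbove (bddAbove_range_of_isRegular hreg hunc hinit y)
  refine ⟨k, hasCofOmega_of_isLUB_range hy hk, (hy_succ 0).trans_le (hk.1 ⟨1, rfl⟩),
    fun n => (hC n).mem_of_isLUB_range hy.monotone hk fun m => ?_⟩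
  refine ⟨Nat.pair n m + 1, (Nat.right_le_pair n m).trans (Nat.le_succ _), ?_⟩
  simpa only [y, clubChain, Nat.unpair_pair] using hnext_mem n (y (Nat.pair n m))

end WellOrder

theorem exists_uniform_index_general {α : Type*} [LinearOrder α] [WellFoundedLT α]
    (hreg : (#α).IsRegular) (hunc : ℵ₀ < #α)
    (hinit : ∀ a : α, #(Set.Iio a) < #α)
    (j : α → ℕ → α)
    (hcof : ∀ k, HasCofOmega k → ∀ i < k, ∃ n, i ≤ j k n) :
    ∃ n : ℕ, ∀ i : α, IsStatIn {k : α | HasCofOmega k ∧ i ≤ j k n} := by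
  by_contra! h
  choose i hi using h
  simp only [IsStatIn, not_forall] at hi
  choose C hC hdisj using hi
  obtain ⟨b, hb⟩ := bddAbove_range_of_isRegular hreg hunc hinit i
  obtain ⟨k, hk, hbk, hkC⟩ := exists_hasCofOmega_mem_of_isClubIn hreg hunc hinit hC b
  obtain ⟨n, hn⟩ := hcof k hk b hbk
  exact hdisj n ⟨k, ⟨hk, (hb (mem_range_self n)).trans hn⟩, hkC n⟩

/-- Let `κ` be regular uncountable and, for every `k ∈ E^κ_ω`, let `(j k n)_{n<ω}` be a
sequence cofinal in `k`. Then there is `n* < ω` such that for every `i < κ` the set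
`{k ∈ E^κ_ω : j k n* ≥ i}` is stationary. Here `κ` is represented as a well-ordered type `α`
of regular uncountable cardinality all of whose proper initial segments are of size `< #α`. -/
theorem exists_uniform_index {α : Type*} [LinearOrder α] [WellFoundedLT α]
    (hreg : (#α).IsRegular) (hunc : ℵ₀ < #α)
    (hinit : ∀ a : α, #(Set.Iio a) < #α)
    (j : α → ℕ → α)
    (hlt : ∀ k, HasCofOmega k → ∀ n, j k n < k)
    (hcof : ∀ k, HasCofOmega k → ∀ i < k, ∃ n, i ≤ j k n) :
    ∃ n : ℕ, ∀ i : α, IsStatIn {k : α | HasCofOmega k ∧ i ≤ j k n} :=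
  exists_uniform_index_general hreg hunc hinit j hcof
end

section
/- For every regular uncountable cardinal κ there exists a ⊆-decreasing sequence (x_i)_{i<κ} of stationary subsets of κ whose diagonal intersection △_{i<κ} x_i is contained in {0}. -/
open Set Cardinal

/-- The diagonal intersection `△_{i<κ} x i = {k < κ : k ∈ x i for all i < k}`. -/
def diagInter {α : Type*} [LinearOrder α] (x : α → Set α) : Set α :=
  {k : α | ∀ i < k, k ∈ x i}

/-!
Every `k < κ` of cofinality `ω` carries a ladder `L k : ℕ → κ`, a sequence below `k` cofinal
in `k`, and such points meet every club. As `cof κ > ω`, a countable union of nonstationary sets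
is nonstationary, so for each `i` some `{k : i < L k n}` is stationary. These sets decrease in
`i` and countable subsets of `κ` are bounded, so one `n` serves every `i`. A point `k` of the
diagonal intersection above some `m` would lie in the set indexed by `L k n < k`, i.e.
`L k n < L k n`.
-/

open Order

section Cofinality

variable {α : Type*} [LinearOrder α]

theorem mk_Iic_lt_of_aleph0_le (hα : ℵ₀ ≤ #α) (hinit : ∀ a : α, #(Iio a) < #α) (a : α) :
    #(Iic a) < #α := by
  rw [← Iio_insert]
  exact mk_insert_le.trans_lt <| add_lt_of_lt hα (hinit a) (one_lt_aleph0.trans_le hα)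

theorem cof_eq_mk_of_isRegular (hreg : (#α).IsRegular) (hinit : ∀ a : α, #(Iio a) < #α) :
    cof α = #α := by
  refine (cof_le_cardinalMk α).antisymm (le_cof_iff.2 fun s hs => ?_)
  by_contra! hsmall
  have hcover : ⋃ a ∈ s, Iic a = Set.univ :=
    eq_univ_of_forall fun b => by simpa [and_comm] using hs b
  have := (card_biUnion_lt_iff_forall_of_isRegular hreg hsmall).2 fun a _ =>
    mk_Iic_lt_of_aleph0_le hreg.aleph0_le hinit a
  rw [hcover, mk_univ] at this
  exact this.false

theorem exists_forall_lt_of_aleph0_lt_cof (hα : ℵ₀ < cof α) (f : ℕ → α) :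
    ∃ b, ∀ n, f n < b := by
  have : ¬ IsCofinal (range f) := fun h =>
    (cof_le h).not_gt (hα.trans_le' (le_aleph0_iff_set_countable.2 (countable_range f)))
  simpa using not_isCofinal_iff.1 this

theorem exists_forall_isStationary_of_antitone (hα : ℵ₀ < cof α) {T : ℕ → α → Set α}
    (hT : ∀ n, Antitone (T n)) (h : ∀ i, ∃ n, IsStationary (T n i)) :
    ∃ n, ∀ i, IsStationary (T n i) := by
  by_contra! hno
  choose b hb using hno
  obtain ⟨c, hc⟩ := exists_forall_lt_of_aleph0_lt_cof hα b
  obtain ⟨n, hn⟩ := h c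
  exact hb n (hn.mono (hT n (hc n).le))

end Cofinality

section Ladder

variable {α : Type*} [LinearOrder α]

def IsLadderAt (f : ℕ → α) (k : α) : Prop :=
  (∀ n, f n < k) ∧ ∀ i < k, ∃ n, i < f n

def ladderSet (L : α → ℕ → α) (n : ℕ) (i : α) : Set α :=
  {k | IsLadderAt (L k) k ∧ i < L k n}

theorem antitone_ladderSet (L : α → ℕ → α) (n : ℕ) : Antitone (ladderSet L n) :=
  fun _ _ hij _ hk => ⟨hk.1, hij.trans_lt hk.2⟩

theorem diagInter_ladderSet_subset (L : α → ℕ → α) (n : ℕ) :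
    diagInter (ladderSet L n) ⊆ {k | ∀ m, k ≤ m} := by
  intro k hk m
  by_contra! hmk
  have hladder : IsLadderAt (L k) k := (hk m hmk).1
  exact lt_irrefl _ (hk _ (hladder.1 n)).2

variable [WellFoundedLT α]

attribute [local instance]
  WellFoundedLT.toOrderBot WellFoundedLT.conditionallyCompleteLinearOrderBot

theorem IsClub.exists_isLadderAt_mem (hα : ℵ₀ < cof α) {c : Set α} (hc : IsClub c) (i : α) :
    ∃ k ∈ c, i < k ∧ ∃ f, IsLadderAt f k := by
  have : Nonempty α := ⟨i⟩ -- for the instance `WellFoundedLT.toOrderBot`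
  have hstep (a : α) : ∃ b ∈ c, a < b := by
    obtain ⟨a', ha'⟩ := exists_forall_lt_of_aleph0_lt_cof hα fun _ => a
    obtain ⟨b, hbc, hb⟩ := hc.isCofinal a'
    exact ⟨b, hbc, (ha' 0).trans_le hb⟩
  choose g hgc hlt using hstep
  set f : ℕ → α := fun n => g (g^[n] i)
  have hsucc (n : ℕ) : f (n + 1) = g (f n) := congrArg g (Function.iterate_succ_apply' g n i)
  have hbdd : BddAbove (range f) := by
    obtain ⟨b, hb⟩ := exists_forall_lt_of_aleph0_lt_cof hα f
    exact ⟨b, forall_mem_range.2 fun n => (hb n).le⟩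
  refine ⟨⨆ n, f n, ?_, (hlt i).trans_le (le_ciSup hbdd 0), f, fun n => ?_, fun j hj => ?_⟩
  · exact hc.csSup_mem (range_subset_iff.2 fun n => hgc _) (range_nonempty f) hbdd
  · exact (hsucc n ▸ hlt (f n)).trans_le (le_ciSup hbdd (n + 1))
  · exact exists_lt_of_lt_ciSup hj

theorem isStationary_iUnion_ladderSet (hα : ℵ₀ < cof α) {L : α → ℕ → α}
    (hL : ∀ k, (∃ f, IsLadderAt f k) → IsLadderAt (L k) k) (i : α) :
    IsStationary (⋃ n, ladderSet L n i) := by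
  intro c hc
  obtain ⟨k, hkc, hik, hk⟩ := hc.exists_isLadderAt_mem hα i
  obtain ⟨n, hn⟩ := (hL k hk).2 i hik
  exact ⟨k, mem_iUnion.2 ⟨n, hL k hk, hn⟩, hkc⟩

theorem exists_antitone_isStationary_diagInter_subset (hα : ℵ₀ < cof α) :
    ∃ x : α → Set α, (∀ i, IsStationary (x i)) ∧ Antitone x ∧
      diagInter x ⊆ {k | ∀ m, k ≤ m} := by
  choose! L hL using fun (k : α) (h : ∃ f : ℕ → α, IsLadderAt f k) => h
  have hstat (i : α) : ∃ n, IsStationary (ladderSet L n i) :=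
    (isStationary_iUnion_iff_of_countable hα.ne').1 (isStationary_iUnion_ladderSet hα hL i)
  obtain ⟨n, hn⟩ := exists_forall_isStationary_of_antitone hα (antitone_ladderSet L) hstat
  exact ⟨ladderSet L n, hn, antitone_ladderSet L n, diagInter_ladderSet_subset L n⟩

end Ladder

theorem IsClubIn.isClub {α : Type*} [LinearOrder α] {c : Set α} (hc : IsClubIn c) : IsClub c :=
  ⟨fun _ hd hne _ _ ha => hc.1 _ hd hne _ ha, fun a => (hc.2 a).imp fun _ hb => ⟨hb.1, hb.2.le⟩⟩

theorem IsStationary.isStatIn {α : Type*} [LinearOrder α] {x : Set α} (hx : IsStationary x) :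
    IsStatIn x :=
  fun _ hc => hx hc.isClub

/-- For every regular uncountable cardinal `κ` there is a `⊆`-decreasing sequence
`(x i)_{i<κ}` of stationary sets whose diagonal intersection is contained in `{0}`
(i.e. every member of the diagonal intersection is the least element).
Here `κ` is represented as a well-ordered type `α` of regular uncountable cardinality
all of whose proper initial segments are of size `< #α`. -/
theorem exists_decreasing_stationary_diag_subset_zero {α : Type*} [LinearOrder α]
    [WellFoundedLT α]
    (hreg : (#α).IsRegular) (hunc : ℵ₀ < #α)
    (hinit : ∀ a : α, #(Set.Iio a) < #α) :
    ∃ x : α → Set α, (∀ i, IsStatIn (x i)) ∧ (∀ i j : α, i ≤ j → x j ⊆ x i) ∧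
      diagInter x ⊆ {k : α | ∀ m : α, k ≤ m} := by
  have hα : ℵ₀ < cof α := cof_eq_mk_of_isRegular hreg hinit ▸ hunc
  obtain ⟨x, hstat, hanti, hdiag⟩ := exists_antitone_isStationary_diagInter_subset hα
  exact ⟨x, fun i => (hstat i).isStatIn, fun _ _ hij => hanti hij, hdiag⟩
end

section
/- Let κ be a regular uncountable cardinal. Then the stationary splitting number s^cl_κ is at least κ if and only if κ is inaccessible. -/
/-!
If `κ ≤ 2^λ` for some `λ < κ`, an injection `f : κ → 𝒫(λ)` yields the `λ` sets `{β | i ∈ f β}`.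
If none of them splits a stationary `x`, then for each `i` one side of the split is
nonstationary; the union of these `λ < κ` sides is nonstationary, and any two points of the
stationary remainder of `x` have the same image under `f`. Conversely, if `κ` is a strong limit
and `|S| < κ`, the `2^|S| < κ` colour classes of `β ↦ {y ∈ S | β ∈ y}` cover `κ`, so one of them is
stationary, and no member of `S` splits it.

Since `sInf ∅ = 0`, the lower bound also needs some splitting family, namely all stationary sets:
this is Solovay's theorem that every stationary `s` splits. If `s` does not split, the points
`β ∈ s` carrying a cofinal `d β ⊆ β` with no limit point in `s ∩ β` are still stationary (take the
least `β ∈ s` that is a limit point of a given club). By Fodor's lemma a point `g η β ∈ d β`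
above `η` takes a constant value `γ η` for almost all such `β`, and for two good `β₁ < β₂` the
point `β₁ = sup_{η < β₁} γ η` is then a limit point of `d β₂` lying in `s`.
-/

open Set Cardinal

/-- `y` stationarily splits `x`: both `x ∩ y` and `x \ y` are stationary. -/
def StatSplits {α : Type*} [LinearOrder α] (y x : Set α) : Prop :=
  IsStatIn (x ∩ y) ∧ IsStatIn (x \ y)

/-- The stationary splitting number `s^cl_κ`: the least cardinality of a family `S` of
stationary sets such that every stationary set is stationarily split by a member of `S`. -/
noncomputable def statSplittingNumber (α : Type*) [LinearOrder α] : Cardinal :=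
  sInf { c : Cardinal | ∃ S : Set (Set α), (∀ y ∈ S, IsStatIn y) ∧
    (∀ x : Set α, IsStatIn x → ∃ y ∈ S, StatSplits y x) ∧ c = #S }

open Order
open scoped Ordinal

universe u

theorem strictMono_iterate_apply {α : Type*} [Preorder α] {F : α → α} (hF : ∀ x, x < F x)
    (a : α) : StrictMono fun n => F^[n] a :=
  strictMono_nat_of_lt_succ fun n => by simpa only [Function.iterate_succ_apply'] using hF _

theorem IsCofinal.exists_gt {α : Type*} [Preorder α] [NoMaxOrder α] {s : Set α}
    (hs : IsCofinal s) (a : α) : ∃ b ∈ s, a < b :=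
  let ⟨a', ha'⟩ := NoMaxOrder.exists_gt a
  let ⟨b, hb, hab⟩ := hs a'
  ⟨b, hb, ha'.trans_le hab⟩

section LinearOrder

variable {α : Type u} [LinearOrder α]

theorem noMaxOrder_of_aleph0_lt_cof (hα : ℵ₀ < cof α) : NoMaxOrder α := by
  have : Nonempty α := cof_ne_zero_iff.1 (aleph0_pos.trans hα).ne'
  rw [← noTopOrder_iff_noMaxOrder, ← one_lt_cof_iff]
  exact one_lt_aleph0.trans hα

theorem isClubIn_iff_isClub [NoMaxOrder α] {c : Set α} : IsClubIn c ↔ IsClub c := by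
  refine ⟨fun ⟨hclosed, hunb⟩ => ⟨fun d hd hne _ a ha => hclosed d hd hne a ha, fun a => ?_⟩,
    fun hc => ⟨fun d hd hne a ha => hc.isLUB_mem hd hne ha, fun a => ?_⟩⟩
  · obtain ⟨b, hb, hab⟩ := hunb a
    exact ⟨b, hb, hab.le⟩
  · exact hc.isCofinal.exists_gt a

theorem isStatIn_iff_isStationary [NoMaxOrder α] {x : Set α} : IsStatIn x ↔ IsStationary x := by
  simp only [IsStatIn, IsStationary, isClubIn_iff_isClub]

theorem statSplits_iff [NoMaxOrder α] {x y : Set α} :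
    StatSplits y x ↔ IsStationary (x ∩ y) ∧ IsStationary (x \ y) := by
  simp only [StatSplits, isStatIn_iff_isStationary]

theorem isClub_Ioi [NoMaxOrder α] (a : α) : IsClub (Ioi a) := by
  refine ⟨fun d hd ⟨x, hx⟩ _ b hb => (hd hx).trans_le (hb.1 hx), fun x => ?_⟩
  obtain ⟨b, hb⟩ := exists_gt (max a x)
  exact ⟨b, (le_max_left a x).trans_lt hb, (le_max_right a x).trans hb.le⟩

theorem IsStationary.exists_gt [NoMaxOrder α] {s : Set α} (hs : IsStationary s) (a : α) :
    ∃ b ∈ s, a < b :=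
  hs (isClub_Ioi a)

def limitPoints (C : Set α) : Set α :=
  {β | ∃ t ⊆ C ∩ Iio β, t.Nonempty ∧ IsLUB t β}

theorem limitPoints_mono {C D : Set α} (h : C ⊆ D) : limitPoints C ⊆ limitPoints D :=
  fun _ ⟨t, ht, hne, hlub⟩ => ⟨t, ht.trans (inter_subset_inter_left _ h), hne, hlub⟩

theorem isRegularCardinalOrder_of_mk_Iio_lt [WellFoundedLT α] (hreg : (#α).IsRegular)
    (hinit : ∀ a : α, #(Iio a) < #α) : IsRegularCardinalOrder α where
  type_lt_le_ord_cof := by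
    have htype : typeLT α = (#α).ord := by
      refine le_antisymm (le_of_forall_lt fun o ho => ?_) (ord_le.2 (Ordinal.card_type _).ge)
      obtain ⟨a, rfl⟩ := Ordinal.typein_surj _ ho
      rw [lt_ord, Ordinal.card_typein]
      exact hinit a
    rw [← Ordinal.cof_type, htype, hreg.cof_ord]

end LinearOrder

section WellFoundedLT

variable {α : Type u} [LinearOrder α] [WellFoundedLT α] (hα : ℵ₀ < cof α)
include hα

theorem IsStationary.diff {s t : Set α} (hs : IsStationary s) (ht : ¬ IsStationary t) :
    IsStationary (s \ t) := by
  have := hs.mono (s.subset_sdiff_union t)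
  rwa [isStationary_union_iff hα.ne', or_iff_left ht] at this

theorem StrictMono.exists_isLUB_range {u : ℕ → α} (hu : StrictMono u) :
    ∃ σ, IsLUB (range u) σ ∧ ∀ n, u n < σ := by
  have hbdd : BddAbove (range u) := .of_not_isCofinal fun h =>
    ((cof_le h).trans (le_aleph0_iff_set_countable.2 (countable_range u))).not_gt hα
  have hσ : IsLUB (range u) _ :=
    ⟨wellFounded_lt.min_mem _ hbdd, fun _ hb => wellFounded_lt.min_le hb⟩
  exact ⟨_, hσ, fun n => (hu n.lt_succ_self).trans_le (hσ.1 ⟨n + 1, rfl⟩)⟩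

theorem IsCofinal.isClub_limitPoints {C : Set α} (hC : IsCofinal C) :
    IsClub (limitPoints C) := by
  have := noMaxOrder_of_aleph0_lt_cof hα
  refine ⟨fun t ht ⟨x, hx⟩ _ b hb => ?_, fun a => ?_⟩
  · by_cases hbt : b ∈ t
    · exact ht hbt
    obtain ⟨w, hw, hwne, -⟩ := ht hx
    have hlt : ∀ y ∈ t, y < b := fun y hy => (hb.1 hy).lt_of_ne fun h => hbt (h ▸ hy)
    refine ⟨C ∩ Iio b, subset_rfl, hwne.mono fun z hz => ⟨(hw hz).1, (hw hz).2.trans (hlt x hx)⟩,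
      fun z hz => hz.2.le, fun c hc => hb.2 fun y hy => ?_⟩
    obtain ⟨w', hw', -, hw'y⟩ := ht hy
    exact hw'y.2 fun z hz => hc ⟨(hw' hz).1, (hw' hz).2.trans (hlt y hy)⟩
  · choose F hFC hF using hC.exists_gt
    obtain ⟨σ, hσ, hlt⟩ := (strictMono_iterate_apply hF (F a)).exists_isLUB_range hα
    refine ⟨σ, ⟨_, ?_, range_nonempty _, hσ⟩, ((hF a).trans (hlt 0)).le⟩
    rintro _ ⟨n, rfl⟩
    refine ⟨show F^[n] (F a) ∈ C from ?_, hlt n⟩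
    rw [← Function.iterate_succ_apply, Function.iterate_succ_apply']
    exact hFC _

theorem IsStationary.isStationary_setOf_exists_avoiding {s : Set α} (hs : IsStationary s) :
    IsStationary {β ∈ s | ∃ d ⊆ Iio β, d.Nonempty ∧ IsLUB d β ∧
      ∀ γ ∈ s, γ < β → γ ∉ limitPoints d} := by
  intro C hC
  have hne := hs (hC.isCofinal.isClub_limitPoints hα)
  have hwf := wellFounded_lt (α := α)
  obtain ⟨hβs, t, ht, htne, hβ⟩ := hwf.min_mem _ hne
  have htC : t ⊆ C := ht.trans inter_subset_left
  refine ⟨_, ⟨hβs, t, fun x hx => (ht hx).2, htne, hβ, fun γ hγs hγβ hγ => ?_⟩,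
    hC.isLUB_mem htC htne hβ⟩
  exact hwf.not_lt_min (s ∩ limitPoints C) (x := γ) ⟨hγs, limitPoints_mono htC hγ⟩ hγβ

theorem IsStationary.exists_splits_of_injective {ι : Type u} (hι : #ι < cof α) {f : α → Set ι}
    (hf : Function.Injective f) {x : Set α} (hx : IsStationary x) :
    ∃ i, IsStationary (x ∩ {β | i ∈ f β}) ∧ IsStationary (x \ {β | i ∈ f β}) := by
  have := noMaxOrder_of_aleph0_lt_cof hα
  by_contra! h
  have hN : ∀ i, ∃ N, ¬ IsStationary N ∧
      ∀ β ∈ x \ N, ∀ β' ∈ x \ N, (i ∈ f β ↔ i ∈ f β') := fun i => by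
    by_cases hi : IsStationary (x ∩ {β | i ∈ f β})
    · exact ⟨_, h i hi, fun β hβ β' hβ' => by simp_all⟩
    · exact ⟨_, hi, fun β hβ β' hβ' => by simp_all⟩
  choose N hN hagree using hN
  have hU : ¬ IsStationary (⋃ i, N i) := by
    rw [isStationary_iUnion_iff hα.ne' (by rwa [lift_id, lift_id])]
    exact not_exists.2 hN
  have hx' := hx.diff hα hU
  obtain ⟨β, hβ⟩ := hx'.nonempty
  obtain ⟨β', hβ', hββ'⟩ := hx'.exists_gt β
  refine hββ'.ne (hf (Set.ext fun i => hagree i β ⟨hβ.1, ?_⟩ β' ⟨hβ'.1, ?_⟩))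
  · exact fun h => hβ.2 (mem_iUnion_of_mem i h)
  · exact fun h => hβ'.2 (mem_iUnion_of_mem i h)

theorem exists_isStationary_forall_subset_or_disjoint {S : Set (Set α)} (hS : 2 ^ #S < cof α) :
    ∃ x, IsStationary x ∧ ∀ y ∈ S, x ⊆ y ∨ Disjoint x y := by
  have : Nonempty α := cof_ne_zero_iff.1 (aleph0_pos.trans hα).ne'
  let colour (β : α) : Set S := {y | β ∈ (y : Set α)}
  have huniv : (univ : Set α) = ⋃ p, colour ⁻¹' {p} := by
    rw [← preimage_iUnion, iUnion_of_singleton, preimage_univ]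
  obtain ⟨p, hp⟩ := (isStationary_iUnion_iff hα.ne' (by rwa [lift_id, lift_id, mk_set])).1
    (huniv ▸ IsStationary.univ)
  refine ⟨_, hp, fun y hy => ?_⟩
  by_cases hyp : ⟨y, hy⟩ ∈ p
  · exact Or.inl fun β (hβ : colour β = p) => (hβ ▸ hyp : ⟨y, hy⟩ ∈ colour β)
  · exact Or.inr (disjoint_left.2 fun β (hβ : colour β = p) hβy => hyp (hβ ▸ hβy))

theorem statSplittingNumber_le_of_injective {ι : Type u} (hι : #ι < cof α) {f : α → Set ι}
    (hf : Function.Injective f) : statSplittingNumber α ≤ #ι := by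
  have := noMaxOrder_of_aleph0_lt_cof hα
  let S := {y | IsStatIn y ∧ ∃ i, y = {β | i ∈ f β}}
  have hsplit : ∀ x, IsStatIn x → ∃ y ∈ S, StatSplits y x := by
    intro x hx
    rw [isStatIn_iff_isStationary] at hx
    obtain ⟨i, hi⟩ := hx.exists_splits_of_injective hα hι hf
    refine ⟨_, ⟨?_, i, rfl⟩, statSplits_iff.2 hi⟩
    exact isStatIn_iff_isStationary.2 (hi.1.mono inter_subset_right)
  calc statSplittingNumber α ≤ #S := csInf_le' ⟨S, fun y hy => hy.1, hsplit, rfl⟩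
    _ ≤ #(range fun i => {β | i ∈ f β}) :=
      mk_le_mk_of_subset fun y ⟨_, i, hi⟩ => ⟨i, hi.symm⟩
    _ ≤ #ι := mk_range_le

end WellFoundedLT

section Regular

variable {α : Type u} [LinearOrder α] [WellFoundedLT α] [IsRegularCardinalOrder α]
  (hα : ℵ₀ < cof α)
include hα

theorem isClub_diagInter {c : α → Set α} (hc : ∀ η, IsClub (c η)) :
    IsClub {β | ∀ η < β, β ∈ c η} := by
  have := noMaxOrder_of_aleph0_lt_cof hα
  refine ⟨fun d hd _ _ b hb η hηb => ?_, fun a => ?_⟩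
  · have hne : (d ∩ Ioi η).Nonempty := by
      by_contra h
      exact hηb.not_ge (hb.2 fun x hx => not_lt.1 fun hηx => h ⟨x, hx, hηx⟩)
    refine (hc η).isLUB_mem (fun x hx => hd hx.1 η hx.2) hne
      (hb.of_isCofinalFor inter_subset_left fun x hx => ?_)
    obtain ⟨y, hy⟩ := hne
    rcases lt_or_ge η x with hηx | hxη
    · exact ⟨x, ⟨hx, hηx⟩, le_rfl⟩
    · exact ⟨y, hy, hxη.trans hy.2.le⟩
  · have hF : ∀ x, ∃ y ∈ ⋂ η : Iio x, c η, x < y := fun x =>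
      (IsClub.iInter (f := fun η : Iio x => c η) hα.ne' (by
          rw [lift_id, lift_id, cof_eq_cardinalMk]; exact mk_Iio_lt x ord_cardinalMk)
        fun η => hc η).isCofinal.exists_gt x
    choose F hFc hF using hF
    have hmono := strictMono_iterate_apply hF a
    obtain ⟨σ, hσ, hlt⟩ := hmono.exists_isLUB_range hα
    refine ⟨σ, fun η hησ => ?_, (hlt 0).le⟩
    obtain ⟨n, hn⟩ : ∃ n, η < F^[n] a := by
      by_contra! h
      exact hησ.not_ge (hσ.2 (forall_mem_range.2 h))
    refine (hc η).isLUB_mem (t := range fun m => F^[m + n + 1] a) ?_ (range_nonempty _) ?_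
    · rintro _ ⟨m, rfl⟩
      simp only [Function.iterate_succ_apply']
      exact mem_iInter.1 (hFc _) ⟨η, hn.trans_le (hmono.monotone (by omega))⟩
    · exact hσ.of_isCofinalFor (range_subset_iff.2 fun m => mem_range_self _)
        (forall_mem_range.2 fun k => ⟨_, mem_range_self k, hmono.monotone (by omega)⟩)

theorem not_isStationary_diagUnion {N : α → Set α} (hN : ∀ η, ¬ IsStationary (N η)) :
    ¬ IsStationary {β | ∃ η < β, β ∈ N η} := by
  choose c hc hdisj using fun η => not_isStationary_iff.1 (hN η)
  refine not_isStationary_iff.2 ⟨_, isClub_diagInter hα hc, disjoint_left.2 ?_⟩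
  rintro β ⟨η, hηβ, hβ⟩ hβc
  exact disjoint_left.1 (hdisj η) hβ (hβc η hηβ)

theorem IsStationary.exists_isStationary_inter_preimage {s : Set α} (hs : IsStationary s)
    {f : α → α} (hf : ∀ β ∈ s, f β < β) : ∃ γ, IsStationary (s ∩ f ⁻¹' {γ}) := by
  by_contra! h
  exact not_isStationary_diagUnion hα h (hs.mono fun β hβ => ⟨f β, hf β hβ, hβ, rfl⟩)

theorem IsStationary.exists_not_isStationary_diff_preimage {s : Set α} (hs : IsStationary s)
    (hns : ∀ y, IsStationary (s ∩ y) → ¬ IsStationary (s \ y)) {η : α} {f : α → α}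
    (hf : ∀ β ∈ s, η < β → η < f β ∧ f β < β) :
    ∃ γ, η < γ ∧ ¬ IsStationary (s \ f ⁻¹' {γ}) := by
  have := noMaxOrder_of_aleph0_lt_cof hα
  have hbdd : ¬ IsStationary (Iic η) := not_isStationary_iff.2
    ⟨_, isClub_Ioi η, disjoint_left.2 fun _ h h' => (not_lt.2 h) h'⟩
  obtain ⟨γ, hγ⟩ := (hs.diff hα hbdd).exists_isStationary_inter_preimage hα fun β hβ =>
    (hf β hβ.1 (not_le.1 hβ.2)).2
  obtain ⟨β, ⟨hβs, hηβ⟩, rfl⟩ := hγ.nonempty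
  exact ⟨_, (hf β hβs (not_le.1 hηβ)).1, hns _ (hγ.mono fun x hx => ⟨hx.1.1, hx.2⟩)⟩

theorem IsStationary.exists_isStationary_inter_and_diff {s : Set α} (hs : IsStationary s) :
    ∃ y, IsStationary (s ∩ y) ∧ IsStationary (s \ y) := by
  have := noMaxOrder_of_aleph0_lt_cof hα
  by_contra! hns
  set R := {β ∈ s | ∃ d ⊆ Iio β, d.Nonempty ∧ IsLUB d β ∧ ∀ γ ∈ s, γ < β → γ ∉ limitPoints d}
  have hR : IsStationary R := hs.isStationary_setOf_exists_avoiding hα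
  have hRns : ∀ y, IsStationary (R ∩ y) → ¬ IsStationary (R \ y) := fun y h₁ h₂ =>
    hns y (h₁.mono (inter_subset_inter_left _ (sep_subset s _)))
      (h₂.mono (sdiff_subset_sdiff_left (sep_subset s _)))
  choose! d hdβ hdne hdlub hdavoid using fun β (hβ : β ∈ R) => hβ.2
  have hgex : ∀ η β, β ∈ R → η < β → ∃ δ ∈ d β, η < δ := fun η β hβ hηβ =>
    let ⟨δ, hδ, hηδ, _⟩ := (hdlub β hβ).exists_between hηβ
    ⟨δ, hδ, hηδ⟩
  choose! g hgd hgη using hgex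
  choose γ hηγ hγ using fun η => hR.exists_not_isStationary_diff_preimage hα hRns
    fun β hβ hηβ => ⟨hgη η β hβ hηβ, hdβ β hβ (hgd η β hβ hηβ)⟩
  have hB := hR.diff hα (not_isStationary_diagUnion hα hγ)
  have hBg : ∀ β ∈ R \ {β | ∃ η < β, β ∈ R \ {β | g η β = γ η}}, ∀ η < β, g η β = γ η :=
    fun β hβ η hηβ => by_contra fun h => hβ.2 ⟨η, hηβ, hβ.1, h⟩
  obtain ⟨β₁, hβ₁⟩ := hB.nonempty
  obtain ⟨β₂, hβ₂, h₁₂⟩ := hB.exists_gt β₁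
  have hγlt : ∀ η < β₁, γ η < β₁ := fun η hη =>
    hBg β₁ hβ₁ η hη ▸ hdβ β₁ hβ₁.1 (hgd η β₁ hβ₁.1 hη)
  -- `β₁ ∈ s` is the supremum of the points `γ η = g η β₂ ∈ d β₂`, `η < β₁`.
  refine hdavoid β₂ hβ₂.1 β₁ hβ₁.1.1 h₁₂ ⟨γ '' Iio β₁, ?_, ?_, ?_⟩
  · rintro _ ⟨η, hη, rfl⟩
    exact ⟨hBg β₂ hβ₂ η (hη.trans h₁₂) ▸ hgd η β₂ hβ₂.1 (hη.trans h₁₂), hγlt η hη⟩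
  · exact ((hdne β₁ hβ₁.1).mono (hdβ β₁ hβ₁.1)).image γ
  · refine ⟨forall_mem_image.2 fun η hη => (hγlt η hη).le, fun b hb => ?_⟩
    refine (hdlub β₁ hβ₁.1).2 fun δ hδ => ?_
    exact ((hηγ δ).trans_le (hb (mem_image_of_mem γ (hdβ β₁ hβ₁.1 hδ)))).le

theorem le_statSplittingNumber (h : IsStrongPrelimit #α) : #α ≤ statSplittingNumber α := by
  have := noMaxOrder_of_aleph0_lt_cof hα
  refine le_csInf ⟨_, {y | IsStatIn y}, fun y hy => hy, fun x hx => ?_, rfl⟩ ?_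
  · rw [isStatIn_iff_isStationary] at hx
    obtain ⟨y, hy⟩ := hx.exists_isStationary_inter_and_diff hα
    exact ⟨y, isStatIn_iff_isStationary.2 (hy.1.mono inter_subset_right), statSplits_iff.2 hy⟩
  · rintro _ ⟨S, -, hS, rfl⟩
    by_contra! hlt
    obtain ⟨x, hx, hxS⟩ := exists_isStationary_forall_subset_or_disjoint hα
      (S := S) (by rw [cof_eq_cardinalMk]; exact h hlt)
    obtain ⟨y, hy, hsplit⟩ := hS x (isStatIn_iff_isStationary.2 hx)
    rw [statSplits_iff] at hsplit
    rcases hxS y hy with hxy | hxy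
    · exact not_isStationary_empty (sdiff_eq_empty.2 hxy ▸ hsplit.2)
    · exact not_isStationary_empty (hxy.inter_eq ▸ hsplit.1)

end Regular

/-- For a regular uncountable cardinal `κ`, the stationary splitting number satisfies
`s^cl_κ ≥ κ` if and only if `κ` is inaccessible. Here `κ` is represented as a well-ordered
type `α` of regular uncountable cardinality all of whose proper initial segments are of size
`< #α`. -/
theorem statSplittingNumber_ge_iff_inaccessible {α : Type*} [LinearOrder α] [WellFoundedLT α]
    (hreg : (#α).IsRegular) (hunc : ℵ₀ < #α)
    (hinit : ∀ a : α, #(Set.Iio a) < #α) :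
    #α ≤ statSplittingNumber α ↔ (#α).IsInaccessible := by
  have := isRegularCardinalOrder_of_mk_Iio_lt hreg hinit
  have hα : ℵ₀ < cof α := by rwa [cof_eq_cardinalMk]
  refine ⟨fun h => ⟨hunc, hreg.le_cof_ord, fun κ hκ => ?_⟩,
    fun h => le_statSplittingNumber hα h.isStrongPrelimit⟩
  by_contra! hle
  rw [← mk_out κ, ← mk_set] at hle
  obtain ⟨f⟩ := hle
  have hκα : #κ.out < cof α := by rwa [mk_out, cof_eq_cardinalMk]
  exact ((h.trans (statSplittingNumber_le_of_injective hα hκα f.injective)).trans_eq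
    (mk_out κ)).not_gt hκ
end
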